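/- Let x ∈ E_d and r = (r₁,…,r_d) ∈ ℝ₊^d. Then there exists a solution s = (s₁,…,s_d) ∈ [0,∞]^d of the system (r, x) such that every other solution t of (r, x) satisfies t ≥ s in the coordinatewise partial order. (This s is called the smallest solution of the system (r, x).) -/

import Mathlib

open Filter Topology Set
open scoped ENNReal

noncomputable section

/-- The value of `f` "at `t⁻`" for an extended time `t ∈ [0,∞]`, as an extended real number:
at `t = 0` it is `f 0` (convention `f(0-) = f(0)`), at `t = ∞` it is the limit (limsup) of `f`
at infinity, and at a finite `t > 0` it is the left limit of `f` at `t`. -/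
def preLimE (f : ℝ → ℝ) (t : ℝ≥0∞) : EReal :=
  if t = 0 then (f 0 : EReal)
  else if t = ⊤ then Filter.limsup (fun s : ℝ => (f s : EReal)) Filter.atTop
  else ((Function.leftLim f t.toReal : ℝ) : EReal)

/-- The family `x = (x^{i,j})_{i,j ∈ [d]}` of real functions on `ℝ₊` belongs to the class
`E_d`: each `x i j` is càdlàg on `ℝ₊` with `x i j 0 = 0`, each diagonal entry `x i i` is
downward skip free (no negative jumps), and each off-diagonal entry is nondecreasing. -/
structure MemE (d : ℕ) (x : Fin d → Fin d → ℝ → ℝ) : Prop where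
  zero : ∀ i j, x i j 0 = 0
  rightCont : ∀ i j, ∀ t : ℝ, 0 ≤ t → ContinuousWithinAt (x i j) (Set.Ici t) t
  leftLimEx : ∀ i j, ∀ t : ℝ, 0 < t →
    ∃ l : ℝ, Filter.Tendsto (x i j) (nhdsWithin t (Set.Iio t)) (nhds l)
  skipFree : ∀ i, ∀ t : ℝ, 0 < t → Function.leftLim (x i i) t ≤ x i i t
  mono : ∀ i j, i ≠ j → MonotoneOn (x i j) (Set.Ici 0)

/-- `s ∈ [0,∞]^d` is a solution of the system `(r, x)`:
`r i + ∑_j x^{i,j}(s_j−) = 0` for every coordinate `i` with `s i < ∞`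
(the equality being required in the extended reals, hence implicitly the sum is finite). -/
def IsSolution (d : ℕ) (x : Fin d → Fin d → ℝ → ℝ) (r : Fin d → ℝ)
    (s : Fin d → ℝ≥0∞) : Prop :=
  ∀ i, s i ≠ ⊤ → (r i : EReal) + ∑ j, preLimE (x i j) (s j) = 0

/-!
The smallest solution is the least fixed point, in the complete lattice `[0,∞]^d`, of the map `Γ`
sending `t` to the vector whose `i`-th entry is the first passage time of `x^{i,i}` to the level
`-(r_i + ∑_{j ≠ i} x^{i,j}(t_j−))`. The off-diagonal entries are nondecreasing, so this level
decreases in `t` and `Γ` is monotone (Knaster–Tarski). Right continuity and the absence of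
negative jumps make `x^{i,i}(τ−)` equal to the level at the first passage time `τ`, so a fixed
point of `Γ` is a solution; conversely the `i`-th level is reached by time `t_i` when `t` is a
solution, so `Γ t ≤ t`, whence the least fixed point lies below every solution.
-/

open Function

theorem preLimE_zero (f : ℝ → ℝ) : preLimE f 0 = f 0 := if_pos rfl

theorem preLimE_top (f : ℝ → ℝ) :
    preLimE f ⊤ = limsup (fun s : ℝ => (f s : EReal)) atTop := by
  rw [preLimE, if_neg ENNReal.top_ne_zero, if_pos rfl]

theorem preLimE_of_ne_zero_of_ne_top {f : ℝ → ℝ} {u : ℝ≥0∞} (h0 : u ≠ 0) (htop : u ≠ ⊤) :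
    preLimE f u = leftLim f u.toReal := by
  rw [preLimE, if_neg h0, if_neg htop]

section FirstPassage

variable {f : ℝ → ℝ} {c l t v : ℝ}

def ReachesLevel (f : ℝ → ℝ) (c v : ℝ) : Prop :=
  ∀ ε > 0, ∃ u ∈ Icc 0 v, f u < c + ε

/-- `inf {v ≥ 0 | inf_{[0,v]} f ≤ c}` (`⊤` if there is no such `v`). -/
def firstPassage (f : ℝ → ℝ) (c : ℝ) : ℝ≥0∞ :=
  sInf (ENNReal.ofReal '' {v | 0 ≤ v ∧ ReachesLevel f c v})

theorem firstPassage_le (hv : 0 ≤ v) (h : ReachesLevel f c v) :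
    firstPassage f c ≤ ENNReal.ofReal v :=
  sInf_le ⟨v, ⟨hv, h⟩, rfl⟩

theorem firstPassage_antitone (f : ℝ → ℝ) : Antitone (firstPassage f) := by
  intro c c' hcc'
  refine sInf_le_sInf ?_
  rintro _ ⟨v, ⟨hv, hreach⟩, rfl⟩
  exact ⟨v, ⟨hv, fun ε hε => (hreach ε hε).imp fun u ⟨hu, hfu⟩ => ⟨hu, by linarith⟩⟩, rfl⟩

theorem exists_gap_of_lt_firstPassage (hv : 0 ≤ v) (h : ENNReal.ofReal v < firstPassage f c) :
    ∃ ε > 0, ∀ u ∈ Icc 0 v, c + ε ≤ f u := by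
  by_contra! hreach
  exact (firstPassage_le hv hreach).not_gt h

theorem ofReal_le_firstPassage {ε : ℝ} (hε : 0 < ε)
    (hgap : ∀ u ∈ Icc 0 t, c + ε ≤ f u) : ENNReal.ofReal t ≤ firstPassage f c := by
  refine le_sInf ?_
  rintro _ ⟨v, ⟨-, hreach⟩, rfl⟩
  refine ENNReal.ofReal_le_ofReal (not_lt.1 fun hvt => ?_)
  obtain ⟨u, hu, hfu⟩ := hreach ε hε
  exact (hgap u ⟨hu.1, hu.2.trans hvt.le⟩).not_gt hfu

theorem lt_firstPassage (ht : 0 ≤ t) (hrc : ContinuousWithinAt f (Ici t) t) {ε : ℝ}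
    (hε : 0 < ε) (hgap : ∀ u ∈ Icc 0 t, c + ε ≤ f u) : ENNReal.ofReal t < firstPassage f c := by
  have hnear : ∀ᶠ u in 𝓝[≥] t, c + ε / 2 < f u :=
    hrc.eventually (eventually_gt_nhds (by linarith [hgap t ⟨ht, le_rfl⟩]))
  obtain ⟨t', htt' : t < t', hsub⟩ := mem_nhdsGE_iff_exists_Ico_subset.1 hnear
  have hgap' : ∀ u ∈ Icc 0 ((t + t') / 2), c + ε / 2 ≤ f u := by
    rintro u ⟨hu0, hu⟩
    rcases le_or_gt u t with hut | htu
    · linarith [hgap u ⟨hu0, hut⟩]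
    · exact (hsub ⟨htu.le, by linarith⟩).le
  calc ENNReal.ofReal t < ENNReal.ofReal ((t + t') / 2) :=
        (ENNReal.ofReal_lt_ofReal_iff (by linarith)).2 (by linarith)
    _ ≤ firstPassage f c := ofReal_le_firstPassage (half_pos hε) hgap'

theorem firstPassage_eq_zero_of_le (h : f 0 ≤ c) : firstPassage f c = 0 :=
  nonpos_iff_eq_zero.1 <| ENNReal.ofReal_zero ▸
    firstPassage_le le_rfl fun ε hε => ⟨0, left_mem_Icc.2 le_rfl, by linarith⟩

theorem le_of_firstPassage_eq_zero (hrc : ContinuousWithinAt f (Ici 0) 0)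
    (h : firstPassage f c = 0) : f 0 ≤ c := by
  by_contra! hc
  have hgap : ∀ u ∈ Icc (0 : ℝ) 0, c + (f 0 - c) ≤ f u := by
    rintro u ⟨hu0, hu⟩
    rw [le_antisymm hu hu0]
    linarith
  simpa [h] using lt_firstPassage le_rfl hrc (sub_pos.2 hc) hgap

theorem firstPassage_le_of_tendsto (ht : 0 < t) (hl : Tendsto f (𝓝[<] t) (𝓝 l)) (hlc : l ≤ c) :
    firstPassage f c ≤ ENNReal.ofReal t := by
  refine firstPassage_le ht.le fun ε hε => ?_
  have hbelow : ∀ᶠ u in 𝓝[<] t, f u < c + ε := hl.eventually (eventually_lt_nhds (by linarith))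
  obtain ⟨u, hfu, hu⟩ := (hbelow.and (Ioo_mem_nhdsLT ht)).exists
  exact ⟨u, ⟨hu.1.le, hu.2.le⟩, hfu⟩

theorem eq_of_tendsto_of_firstPassage_eq (ht : 0 < t) (hτ : firstPassage f c = ENNReal.ofReal t)
    (hl : Tendsto f (𝓝[<] t) (𝓝 l)) (hrc : ContinuousWithinAt f (Ici t) t) (hjump : l ≤ f t) :
    l = c := by
  have hbelow : ∀ {u}, 0 ≤ u → u < t → ∃ ε > 0, ∀ w ∈ Icc 0 u, c + ε ≤ f w := fun hu hut =>
    exists_gap_of_lt_firstPassage hu (hτ ▸ (ENNReal.ofReal_lt_ofReal_iff ht).2 hut)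
  refine le_antisymm (not_lt.1 fun hcl => ?_) (ge_of_tendsto hl ?_)
  · -- if `c < l`, then `f` stays above `c` on both sides of `t` (no negative jump at `t`)
    have hnear : ∀ᶠ u in 𝓝[<] t, c + (l - c) / 2 < f u :=
      hl.eventually (eventually_gt_nhds (by linarith))
    obtain ⟨m, hmt, hsub⟩ := mem_nhdsLT_iff_exists_Ioo_subset.1 hnear
    obtain ⟨ε, hε, hgap⟩ := hbelow (le_max_right m 0) (max_lt hmt ht)
    have hgap_t : ∀ u ∈ Icc 0 t, c + min ((l - c) / 2) ε ≤ f u := by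
      rintro u ⟨hu0, hut⟩
      have := min_le_left ((l - c) / 2) ε
      rcases le_or_gt u (max m 0) with hum | hmu
      · linarith [hgap u ⟨hu0, hum⟩, min_le_right ((l - c) / 2) ε]
      rcases hut.lt_or_eq with hut | rfl
      · linarith [show c + (l - c) / 2 < f u from hsub ⟨(le_max_left m 0).trans_lt hmu, hut⟩]
      · linarith
    exact (lt_firstPassage ht.le hrc (lt_min (by linarith) hε) hgap_t).ne hτ.symm
  · filter_upwards [Ioo_mem_nhdsLT ht] with u hu
    obtain ⟨ε, hε, hgap⟩ := hbelow hu.1.le hu.2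
    linarith [hgap u ⟨hu.1.le, le_rfl⟩]

theorem preLimE_firstPassage (hrc : ∀ t, 0 ≤ t → ContinuousWithinAt f (Ici t) t)
    (hll : ∀ t, 0 < t → ∃ l, Tendsto f (𝓝[<] t) (𝓝 l))
    (hsf : ∀ t, 0 < t → leftLim f t ≤ f t) (hc : c ≤ f 0) (hτ : firstPassage f c ≠ ⊤) :
    preLimE f (firstPassage f c) = c := by
  rcases eq_or_ne (firstPassage f c) 0 with h0 | h0
  · rw [h0, preLimE_zero, le_antisymm (le_of_firstPassage_eq_zero (hrc 0 le_rfl) h0) hc]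
  · have ht := ENNReal.toReal_pos h0 hτ
    rw [preLimE_of_ne_zero_of_ne_top h0 hτ, eq_of_tendsto_of_firstPassage_eq ht
      (ENNReal.ofReal_toReal hτ).symm (tendsto_leftLim_of_tendsto (hll _ ht)) (hrc _ ht.le)
      (hsf _ ht)]

theorem firstPassage_le_of_preLimE_eq (hll : ∀ t, 0 < t → ∃ l, Tendsto f (𝓝[<] t) (𝓝 l))
    {u : ℝ≥0∞} (h : preLimE f u = c) : firstPassage f c ≤ u := by
  rcases eq_or_ne u 0 with rfl | h0
  · rw [preLimE_zero, EReal.coe_eq_coe_iff] at h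
    exact (firstPassage_eq_zero_of_le h.le).le
  rcases eq_or_ne u ⊤ with rfl | htop
  · exact le_top
  rw [preLimE_of_ne_zero_of_ne_top h0 htop, EReal.coe_eq_coe_iff] at h
  have ht := ENNReal.toReal_pos h0 htop
  rw [← ENNReal.ofReal_toReal htop]
  exact firstPassage_le_of_tendsto ht (tendsto_leftLim_of_tendsto (hll _ ht)) h.le

end FirstPassage

section Monotone

variable {f : ℝ → ℝ} {t w : ℝ}

theorem leftLim_le_of_monotoneOn (hm : MonotoneOn f (Ici 0))
    (hll : ∃ l, Tendsto f (𝓝[<] t) (𝓝 l)) (ht : 0 < t) : leftLim f t ≤ f t := by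
  refine le_of_tendsto (tendsto_leftLim_of_tendsto hll) ?_
  filter_upwards [Ioo_mem_nhdsLT ht] with u hu
  exact hm hu.1.le ht.le hu.2.le

theorem le_leftLim_of_monotoneOn (hm : MonotoneOn f (Ici 0))
    (hll : ∃ l, Tendsto f (𝓝[<] t) (𝓝 l)) (hw : 0 ≤ w) (hwt : w < t) : f w ≤ leftLim f t := by
  refine ge_of_tendsto (tendsto_leftLim_of_tendsto hll) ?_
  filter_upwards [Ioo_mem_nhdsLT hwt] with u hu
  exact hm hw (hw.trans hu.1.le) hu.1.le

theorem preLimE_le_of_monotoneOn (hm : MonotoneOn f (Ici 0))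
    (hll : ∀ t, 0 < t → ∃ l, Tendsto f (𝓝[<] t) (𝓝 l)) {u : ℝ≥0∞} (hu : u ≠ ⊤) :
    preLimE f u ≤ f u.toReal := by
  rcases eq_or_ne u 0 with rfl | h0
  · rw [preLimE_zero, ENNReal.toReal_zero]
  have ht := ENNReal.toReal_pos h0 hu
  rw [preLimE_of_ne_zero_of_ne_top h0 hu]
  exact EReal.coe_le_coe_iff.2 (leftLim_le_of_monotoneOn hm (hll _ ht) ht)

theorem le_preLimE_of_monotoneOn (hm : MonotoneOn f (Ici 0))
    (hll : ∀ t, 0 < t → ∃ l, Tendsto f (𝓝[<] t) (𝓝 l)) (hw : 0 ≤ w) {u : ℝ≥0∞}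
    (hwu : ENNReal.ofReal w < u) :
    (f w : EReal) ≤ preLimE f u := by
  rcases eq_or_ne u ⊤ with rfl | htop
  · rw [preLimE_top]
    refine le_limsup_of_frequently_le (Eventually.frequently ?_)
      (isBoundedUnder_of ⟨⊤, fun _ => le_top⟩)
    filter_upwards [eventually_ge_atTop w] with u hu
    exact EReal.coe_le_coe_iff.2 (hm hw (hw.trans hu) hu)
  have hwt : w < u.toReal := (ENNReal.ofReal_lt_iff_lt_toReal hw htop).1 hwu
  rw [preLimE_of_ne_zero_of_ne_top (pos_of_gt hwu).ne' htop]
  exact EReal.coe_le_coe_iff.2 (le_leftLim_of_monotoneOn hm (hll _ (hw.trans_lt hwt)) hw hwt)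

theorem monotone_preLimE_of_monotoneOn (hm : MonotoneOn f (Ici 0))
    (hll : ∀ t, 0 < t → ∃ l, Tendsto f (𝓝[<] t) (𝓝 l)) : Monotone (preLimE f) := by
  intro u v huv
  rcases huv.lt_or_eq with h | rfl
  · exact (preLimE_le_of_monotoneOn hm hll h.ne_top).trans
      (le_preLimE_of_monotoneOn hm hll ENNReal.toReal_nonneg
        (by rwa [ENNReal.ofReal_toReal h.ne_top]))
  · exact le_rfl

end Monotone

section System

variable {d : ℕ} {x : Fin d → Fin d → ℝ → ℝ} {r : Fin d → ℝ}

theorem MemE.preLimE_nonneg (hx : MemE d x) {i j : Fin d} (hij : i ≠ j) (u : ℝ≥0∞) :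
    0 ≤ preLimE (x i j) u := by
  simpa [preLimE_zero, hx.zero] using monotone_preLimE_of_monotoneOn (hx.mono i j hij)
    (hx.leftLimEx i j) (zero_le : 0 ≤ u)

theorem MemE.monotone_preLimE (hx : MemE d x) {i j : Fin d} (hij : i ≠ j) :
    Monotone (preLimE (x i j)) :=
  monotone_preLimE_of_monotoneOn (hx.mono i j hij) (hx.leftLimEx i j)

variable (x r) in
def offDiagSum (t : Fin d → ℝ≥0∞) (i : Fin d) : EReal :=
  r i + ∑ j ∈ Finset.univ.erase i, preLimE (x i j) (t j)

variable (x r) in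
theorem add_sum_preLimE_eq (t : Fin d → ℝ≥0∞) (i : Fin d) :
    (r i : EReal) + ∑ j, preLimE (x i j) (t j) = offDiagSum x r t i + preLimE (x i i) (t i) := by
  rw [offDiagSum, add_assoc, Finset.sum_erase_add _ _ (Finset.mem_univ i)]

theorem coe_le_offDiagSum (hx : MemE d x) (t : Fin d → ℝ≥0∞) (i : Fin d) :
    (r i : EReal) ≤ offDiagSum x r t i :=
  le_add_of_nonneg_right <| Finset.sum_nonneg fun _ hj =>
    hx.preLimE_nonneg (Finset.ne_of_mem_erase hj).symm _

theorem offDiagSum_ne_bot (hx : MemE d x) (t : Fin d → ℝ≥0∞) (i : Fin d) :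
    offDiagSum x r t i ≠ ⊥ :=
  ne_bot_of_le_ne_bot (EReal.coe_ne_bot _) (coe_le_offDiagSum hx t i)

theorem offDiagSum_mono (hx : MemE d x) {t t' : Fin d → ℝ≥0∞} (h : t ≤ t') (i : Fin d) :
    offDiagSum x r t i ≤ offDiagSum x r t' i :=
  add_le_add le_rfl <| Finset.sum_le_sum fun j hj =>
    hx.monotone_preLimE (Finset.ne_of_mem_erase hj).symm (h j)

variable (x r) in
/-- The map `Γ` of the header. The `if` is needed because `EReal.toReal ⊤ = 0`, whereas an
infinite off-diagonal sum means the level `-∞`, which is never reached. -/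
def passageMap (t : Fin d → ℝ≥0∞) (i : Fin d) : ℝ≥0∞ :=
  if offDiagSum x r t i = ⊤ then ⊤ else firstPassage (x i i) (-(offDiagSum x r t i).toReal)

theorem monotone_passageMap (hx : MemE d x) : Monotone (passageMap x r) := by
  intro t t' h i
  have hle := offDiagSum_mono (r := r) hx h i
  by_cases htop : offDiagSum x r t' i = ⊤
  · simp [passageMap, htop]
  have htop' : offDiagSum x r t i ≠ ⊤ := ne_top_of_le_ne_top htop hle
  simp only [passageMap, if_neg htop, if_neg htop']
  exact firstPassage_antitone _
    (neg_le_neg (EReal.toReal_le_toReal hle (offDiagSum_ne_bot hx t i) htop))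

theorem isSolution_of_passageMap_eq (hx : MemE d x) (hr : ∀ i, 0 ≤ r i) {s : Fin d → ℝ≥0∞}
    (hs : passageMap x r s = s) : IsSolution d x r s := by
  intro i hi
  have hsi := congrFun hs i
  have htop : offDiagSum x r s i ≠ ⊤ := fun h => hi (by rw [← hsi, passageMap, if_pos h])
  obtain ⟨a, ha⟩ : ∃ a : ℝ, offDiagSum x r s i = a :=
    ⟨_, (EReal.coe_toReal htop (offDiagSum_ne_bot hx s i)).symm⟩
  have ha0 : (0 : EReal) ≤ a := ha ▸ (EReal.coe_nonneg.2 (hr i)).trans (coe_le_offDiagSum hx s i)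
  rw [passageMap, if_neg htop, ha, EReal.toReal_coe] at hsi
  rw [add_sum_preLimE_eq, ha, ← hsi, preLimE_firstPassage (hx.rightCont i i) (hx.leftLimEx i i)
    (hx.skipFree i) (by linarith [hx.zero i i, EReal.coe_nonneg.1 ha0]) (hsi ▸ hi),
    ← EReal.coe_add, add_neg_cancel, EReal.coe_zero]

theorem passageMap_le_of_isSolution (hx : MemE d x) {t : Fin d → ℝ≥0∞} (ht : IsSolution d x r t) :
    passageMap x r t ≤ t := by
  intro i
  rcases eq_or_ne (t i) ⊤ with htop | htop
  · simp [htop]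
  obtain ⟨c, hc⟩ : ∃ c : ℝ, preLimE (x i i) (t i) = c := by
    rcases eq_or_ne (t i) 0 with h0 | h0
    · exact ⟨_, h0 ▸ preLimE_zero _⟩
    · exact ⟨_, preLimE_of_ne_zero_of_ne_top h0 htop⟩
  have hsum := ht i htop
  rw [add_sum_preLimE_eq, hc] at hsum
  have hA : offDiagSum x r t i = ((-c : ℝ) : EReal) := by
    rw [← EReal.add_sub_cancel_right (a := offDiagSum x r t i) (b := c), hsum, zero_sub,
      EReal.coe_neg]
  rw [passageMap, hA, if_neg (EReal.coe_ne_top _), EReal.toReal_coe, neg_neg]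
  exact firstPassage_le_of_preLimE_eq (hx.leftLimEx i i) hc

end System

theorem exists_smallest_solution_general (d : ℕ)
    (x : Fin d → Fin d → ℝ → ℝ) (hx : MemE d x)
    (r : Fin d → ℝ) (hr : ∀ i, 0 ≤ r i) :
    ∃ s : Fin d → ℝ≥0∞, IsSolution d x r s ∧
      ∀ t : Fin d → ℝ≥0∞, IsSolution d x r t → s ≤ t := by
  let Γ : (Fin d → ℝ≥0∞) →o (Fin d → ℝ≥0∞) := ⟨passageMap x r, monotone_passageMap hx⟩
  exact ⟨Γ.lfp, isSolution_of_passageMap_eq hx hr Γ.map_lfp,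
    fun t ht => Γ.lfp_le (passageMap_le_of_isSolution hx ht)⟩

/-- for `x ∈ E_d` and `r ∈ ℝ₊^d` there exists a smallest solution of the
system `(r, x)`: a solution `s` such that any other solution `t` satisfies `s ≤ t`
coordinatewise. -/
theorem exists_smallest_solution (d : ℕ) (hd : 1 ≤ d)
    (x : Fin d → Fin d → ℝ → ℝ) (hx : MemE d x)
    (r : Fin d → ℝ) (hr : ∀ i, 0 ≤ r i) :
    ∃ s : Fin d → ℝ≥0∞, IsSolution d x r s ∧
      ∀ t : Fin d → ℝ≥0∞, IsSolution d x r t → s ≤ t :=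
  exists_smallest_solution_general d x hx r hr

end
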